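/- arXiv:1605.08795 — 2 statements merged into one kernel-verified Lean document; each statement's English description precedes it below -/
import Mathlib

section
/- Let A ∈ ℝ^{m×n}, let S be a nonempty finite set of unit vectors in ℝ^m, and let T be a finite set of vectors in ℝ^m with f_A(S) ≥ f_A(T) and f_A(S) > 0. Then there exists v ∈ S such that f_A(T ∪ {v}) − f_A(T) ≥ σ_min(S)·(f_A(S) − f_A(T))² / (4·|S|·f_A(S)). -/
open scoped RealInnerProductSpace

attribute [local instance] Classical.decEq

noncomputable def fVec {m : ℕ} (u : EuclideanSpace ℝ (Fin m))
    (S : Finset (EuclideanSpace ℝ (Fin m))) : ℝ :=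
  ‖(Submodule.orthogonalProjectionOnto (Submodule.span ℝ (S : Set (EuclideanSpace ℝ (Fin m)))) u :
      EuclideanSpace ℝ (Fin m))‖ ^ 2

noncomputable def fMat {m n : ℕ} (A : Fin n → EuclideanSpace ℝ (Fin m))
    (S : Finset (EuclideanSpace ℝ (Fin m))) : ℝ :=
  ∑ j, fVec (A j) S

noncomputable def sigmaMin {m : ℕ} (S : Finset (EuclideanSpace ℝ (Fin m))) : ℝ :=
  sInf {r : ℝ | ∃ α : S → ℝ, ∑ v, (α v) ^ 2 = 1 ∧
    r = ‖∑ v, α v • (v : EuclideanSpace ℝ (Fin m))‖ ^ 2}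

noncomputable def sigmaMax {m : ℕ} (S : Finset (EuclideanSpace ℝ (Fin m))) : ℝ :=
  sSup {r : ℝ | ∃ α : S → ℝ, ∑ v, (α v) ^ 2 = 1 ∧
    r = ‖∑ v, α v • (v : EuclideanSpace ℝ (Fin m))‖ ^ 2}

def IsGreedySeq {m nA nB : ℕ} (A : Fin nA → EuclideanSpace ℝ (Fin m))
    (B : Fin nB → EuclideanSpace ℝ (Fin m))
    (T : ℕ → Finset (EuclideanSpace ℝ (Fin m))) (b : ℕ → Fin nB) : Prop :=
  T 0 = ∅ ∧ ∀ i, T (i + 1) = insert (B (b i)) (T i) ∧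
    ∀ j, fMat A (insert (B j) (T i)) ≤ fMat A (insert (B (b i)) (T i))

/-!
Write `P_K` for the orthogonal projection onto `K` and `r_j = A_j - P_T A_j` for the residuals.
Adding a unit vector `v` to `T` gains at least `∑ j, ⟪r_j, v⟫²`, and summed over `v ∈ S` these
gains are at least `σ_min(S) ∑ j, ‖P_S r_j‖²`. Conversely `‖P_S A_j‖ ≤ ‖P_T A_j‖ + ‖P_S r_j‖`,
which by Cauchy–Schwarz gives `(f_A(S) - f_A(T))² ≤ 4 f_A(S) ∑ j, ‖P_S r_j‖²`. Hence the total
gain over `S` is at least `σ_min(S) (f_A(S) - f_A(T))² / (4 f_A(S))`, and some `v ∈ S` achieves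
a `1 / |S|` share of it.
-/

namespace Submodule

variable {E : Type*} [NormedAddCommGroup E] [InnerProductSpace ℝ E]

theorem sq_inner_le_norm_sq_starProjection_mul (K : Submodule ℝ E) [K.HasOrthogonalProjection]
    (u : E) {v : E} (hv : v ∈ K) : ⟪u, v⟫ ^ 2 ≤ ‖K.starProjection u‖ ^ 2 * ‖v‖ ^ 2 := by
  have hself : ⟪u, v⟫ = ⟪K.starProjection u, v⟫ := by
    rw [inner_starProjection_left_eq_right, starProjection_eq_self_iff.2 hv]
  rw [hself, ← mul_pow, ← sq_abs]
  exact pow_le_pow_left₀ (abs_nonneg _) (abs_real_inner_le_norm _ _) 2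

theorem norm_sq_starProjection_of_le {K K' : Submodule ℝ E} [K.HasOrthogonalProjection]
    [K'.HasOrthogonalProjection] (h : K ≤ K') (u : E) :
    ‖K'.starProjection u‖ ^ 2 =
      ‖K.starProjection u‖ ^ 2 + ‖K'.starProjection (u - K.starProjection u)‖ ^ 2 := by
  have hfix : K'.starProjection (K.starProjection u) = K.starProjection u :=
    starProjection_eq_self_iff.2 (h (K.starProjection_apply_mem u))
  have horth : ⟪K.starProjection u, K'.starProjection (u - K.starProjection u)⟫ = 0 := by
    rw [← inner_starProjection_left_eq_right, hfix, real_inner_comm,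
      starProjection_inner_eq_zero _ _ (K.starProjection_apply_mem u)]
  have hsplit : K'.starProjection u =
      K.starProjection u + K'.starProjection (u - K.starProjection u) := by
    rw [map_sub, hfix, add_sub_cancel]
  rw [hsplit, norm_add_sq_real, horth, mul_zero, add_zero]

theorem sq_inner_sub_starProjection_le {K K' : Submodule ℝ E} [K.HasOrthogonalProjection]
    [K'.HasOrthogonalProjection] (h : K ≤ K') (u : E) {v : E} (hv : v ∈ K') (hv1 : ‖v‖ ≤ 1) :
    ⟪u - K.starProjection u, v⟫ ^ 2 ≤ ‖K'.starProjection u‖ ^ 2 - ‖K.starProjection u‖ ^ 2 := by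
  rw [norm_sq_starProjection_of_le h, add_sub_cancel_left]
  calc ⟪u - K.starProjection u, v⟫ ^ 2
      ≤ ‖K'.starProjection (u - K.starProjection u)‖ ^ 2 * ‖v‖ ^ 2 :=
        K'.sq_inner_le_norm_sq_starProjection_mul _ hv
    _ ≤ ‖K'.starProjection (u - K.starProjection u)‖ ^ 2 * 1 := by
        gcongr; exact pow_le_one₀ (norm_nonneg v) hv1
    _ = _ := mul_one _

theorem norm_starProjection_le_add (K L : Submodule ℝ E) [K.HasOrthogonalProjection]
    [L.HasOrthogonalProjection] (u : E) :
    ‖L.starProjection u‖ ≤ ‖K.starProjection u‖ + ‖L.starProjection (u - K.starProjection u)‖ :=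
  calc ‖L.starProjection u‖
      = ‖L.starProjection (K.starProjection u) + L.starProjection (u - K.starProjection u)‖ := by
        rw [← map_add, add_sub_cancel]
    _ ≤ _ := (norm_add_le _ _).trans (by gcongr; exact L.norm_starProjection_apply_le _)

end Submodule

theorem sq_sum_sq_sub_sum_sq_le_of_le_add {ι : Type*} (s : Finset ι) {a b c : ι → ℝ}
    (ha : ∀ i ∈ s, 0 ≤ a i) (hb : ∀ i ∈ s, 0 ≤ b i) (habc : ∀ i ∈ s, a i ≤ b i + c i)
    (hba : ∑ i ∈ s, b i ^ 2 ≤ ∑ i ∈ s, a i ^ 2) :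
    (∑ i ∈ s, a i ^ 2 - ∑ i ∈ s, b i ^ 2) ^ 2 ≤ 4 * (∑ i ∈ s, a i ^ 2) * ∑ i ∈ s, c i ^ 2 := by
  have hdiff : ∑ i ∈ s, a i ^ 2 - ∑ i ∈ s, b i ^ 2 ≤ ∑ i ∈ s, (a i + b i) * c i := by
    rw [← Finset.sum_sub_distrib]
    refine Finset.sum_le_sum fun i hi => ?_
    nlinarith [ha i hi, hb i hi, habc i hi]
  have hsum_sq : ∑ i ∈ s, (a i + b i) ^ 2 ≤ 4 * ∑ i ∈ s, a i ^ 2 := by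
    calc ∑ i ∈ s, (a i + b i) ^ 2 ≤ ∑ i ∈ s, (2 * a i ^ 2 + 2 * b i ^ 2) :=
          Finset.sum_le_sum fun i _ => by nlinarith [sq_nonneg (a i - b i)]
      _ ≤ 4 * ∑ i ∈ s, a i ^ 2 := by
          rw [Finset.sum_add_distrib, ← Finset.mul_sum, ← Finset.mul_sum]; linarith
  calc (∑ i ∈ s, a i ^ 2 - ∑ i ∈ s, b i ^ 2) ^ 2 ≤ (∑ i ∈ s, (a i + b i) * c i) ^ 2 :=
        pow_le_pow_left₀ (sub_nonneg.2 hba) hdiff 2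
    _ ≤ (∑ i ∈ s, (a i + b i) ^ 2) * ∑ i ∈ s, c i ^ 2 := Finset.sum_mul_sq_le_sq_mul_sq _ _ _
    _ ≤ 4 * (∑ i ∈ s, a i ^ 2) * ∑ i ∈ s, c i ^ 2 :=
        mul_le_mul_of_nonneg_right hsum_sq (Finset.sum_nonneg fun i _ => sq_nonneg _)

theorem Finset.exists_div_mul_card_le {ι : Type*} {s : Finset ι} (hs : s.Nonempty) {g : ι → ℝ}
    (hg : ∀ i ∈ s, 0 ≤ g i) {x c : ℝ} (hc : 0 ≤ c) (h : x ≤ c * ∑ i ∈ s, g i) :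
    ∃ i ∈ s, x / (c * s.card) ≤ g i := by
  refine Finset.exists_le_of_sum_le hs ?_
  have hcard : (s.card : ℝ) ≠ 0 := by exact_mod_cast hs.card_pos.ne'
  rw [Finset.sum_const, nsmul_eq_mul, mul_comm c, ← div_div, div_right_comm,
    mul_div_cancel₀ _ hcard]
  exact div_le_of_le_mul₀ hc (Finset.sum_nonneg hg) (by rwa [mul_comm])

section SigmaMin

variable {m : ℕ}

theorem sigmaMin_nonneg (S : Finset (EuclideanSpace ℝ (Fin m))) : 0 ≤ sigmaMin S :=
  Real.sInf_nonneg <| by rintro _ ⟨α, -, rfl⟩; positivity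

theorem sigmaMin_mul_sum_sq_le (S : Finset (EuclideanSpace ℝ (Fin m)))
    (f : EuclideanSpace ℝ (Fin m) → ℝ) :
    sigmaMin S * ∑ v ∈ S, f v ^ 2 ≤ ‖∑ v ∈ S, f v • v‖ ^ 2 := by
  rcases (Finset.sum_nonneg fun v _ => sq_nonneg (f v) : 0 ≤ ∑ v ∈ S, f v ^ 2).eq_or_lt with hs | hs
  · rw [← hs, mul_zero]; positivity
  set s := ∑ v ∈ S, f v ^ 2
  have hroot : Real.sqrt s ^ 2 = s := Real.sq_sqrt hs.le
  have hunit : ∑ v : S, (f v / Real.sqrt s) ^ 2 = 1 := by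
    rw [Finset.sum_coe_sort S fun v => (f v / Real.sqrt s) ^ 2]
    simp_rw [div_pow, hroot]
    rw [← Finset.sum_div, div_self hs.ne']
  have hcomb : ∑ v : S, (f v / Real.sqrt s) • (v : EuclideanSpace ℝ (Fin m)) =
      (Real.sqrt s)⁻¹ • ∑ v ∈ S, f v • v := by
    rw [Finset.sum_coe_sort S fun v => (f v / Real.sqrt s) • v, Finset.smul_sum]
    simp_rw [smul_smul, div_eq_inv_mul]
  have hle : sigmaMin S ≤ ‖(Real.sqrt s)⁻¹ • ∑ v ∈ S, f v • v‖ ^ 2 :=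
    csInf_le ⟨0, by rintro _ ⟨α, -, rfl⟩; positivity⟩ ⟨_, hunit, by rw [hcomb]⟩
  rwa [norm_smul, mul_pow, norm_inv, Real.norm_eq_abs, abs_of_nonneg (Real.sqrt_nonneg s),
    inv_pow, hroot, inv_mul_eq_div, le_div_iff₀ hs] at hle

theorem sigmaMin_mul_norm_sq_le {S : Finset (EuclideanSpace ℝ (Fin m))}
    {x : EuclideanSpace ℝ (Fin m)}
    (hx : x ∈ Submodule.span ℝ (S : Set (EuclideanSpace ℝ (Fin m)))) :
    sigmaMin S * ‖x‖ ^ 2 ≤ ∑ v ∈ S, ⟪x, v⟫ ^ 2 := by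
  rcases (norm_nonneg x).eq_or_lt with hx0 | hx0
  · rw [← hx0, zero_pow two_ne_zero, mul_zero]
    positivity
  obtain ⟨f, -, hf⟩ := Submodule.mem_span_finset.1 hx
  have hexpand : ‖x‖ ^ 2 = ∑ v ∈ S, f v * ⟪x, v⟫ := by
    rw [← real_inner_self_eq_norm_sq]
    nth_rw 2 [← hf]
    simp_rw [inner_sum, real_inner_smul_right]
  have hcs : (‖x‖ ^ 2) ^ 2 ≤ (∑ v ∈ S, f v ^ 2) * ∑ v ∈ S, ⟪x, v⟫ ^ 2 :=
    hexpand ▸ Finset.sum_mul_sq_le_sq_mul_sq S f fun v => ⟪x, v⟫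
  have hσ : sigmaMin S * ∑ v ∈ S, f v ^ 2 ≤ ‖x‖ ^ 2 := hf ▸ sigmaMin_mul_sum_sq_le S f
  have hx2 : 0 < ‖x‖ ^ 2 := by positivity
  refine le_of_mul_le_mul_left ?_ hx2
  calc ‖x‖ ^ 2 * (sigmaMin S * ‖x‖ ^ 2) = sigmaMin S * (‖x‖ ^ 2) ^ 2 := by ring
    _ ≤ sigmaMin S * ((∑ v ∈ S, f v ^ 2) * ∑ v ∈ S, ⟪x, v⟫ ^ 2) :=
        mul_le_mul_of_nonneg_left hcs (sigmaMin_nonneg S)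
    _ = (sigmaMin S * ∑ v ∈ S, f v ^ 2) * ∑ v ∈ S, ⟪x, v⟫ ^ 2 := by ring
    _ ≤ ‖x‖ ^ 2 * ∑ v ∈ S, ⟪x, v⟫ ^ 2 :=
        mul_le_mul_of_nonneg_right hσ (Finset.sum_nonneg fun v _ => sq_nonneg _)

theorem sigmaMin_mul_norm_sq_starProjection_le (S : Finset (EuclideanSpace ℝ (Fin m)))
    (y : EuclideanSpace ℝ (Fin m)) :
    sigmaMin S * ‖(Submodule.span ℝ (S : Set (EuclideanSpace ℝ (Fin m)))).starProjection y‖ ^ 2 ≤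
      ∑ v ∈ S, ⟪y, v⟫ ^ 2 := by
  set K := Submodule.span ℝ (S : Set (EuclideanSpace ℝ (Fin m)))
  refine (sigmaMin_mul_norm_sq_le (K.starProjection_apply_mem y)).trans_eq
    (Finset.sum_congr rfl fun v hv => ?_)
  rw [Submodule.inner_starProjection_left_eq_right,
    Submodule.starProjection_eq_self_iff.2 (Submodule.subset_span hv)]

end SigmaMin

section MarginalGain

open Submodule

variable {m n : ℕ}

theorem sum_sq_inner_le_fMat_insert_sub (A : Fin n → EuclideanSpace ℝ (Fin m))
    (T : Finset (EuclideanSpace ℝ (Fin m))) {v : EuclideanSpace ℝ (Fin m)} (hv : ‖v‖ ≤ 1) :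
    ∑ j, ⟪A j - (span ℝ (T : Set (EuclideanSpace ℝ (Fin m)))).starProjection (A j), v⟫ ^ 2 ≤
      fMat A (insert v T) - fMat A T := by
  rw [fMat, fMat, ← Finset.sum_sub_distrib]
  exact Finset.sum_le_sum fun j _ =>
    sq_inner_sub_starProjection_le (span_mono (by simp)) (A j) (subset_span (by simp)) hv

theorem sq_fMat_sub_le (A : Fin n → EuclideanSpace ℝ (Fin m))
    (S T : Finset (EuclideanSpace ℝ (Fin m))) (hST : fMat A T ≤ fMat A S) :
    (fMat A S - fMat A T) ^ 2 ≤ 4 * fMat A S *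
      ∑ j, ‖(span ℝ (S : Set (EuclideanSpace ℝ (Fin m)))).starProjection
        (A j - (span ℝ (T : Set (EuclideanSpace ℝ (Fin m)))).starProjection (A j))‖ ^ 2 :=
  sq_sum_sq_sub_sum_sq_le_of_le_add Finset.univ (fun _ _ => norm_nonneg _)
    (fun _ _ => norm_nonneg _)
    (fun j _ => norm_starProjection_le_add _ _ (A j)) hST

end MarginalGain

theorem exists_large_marginal_gain_general {m n : ℕ}
    (A : Fin n → EuclideanSpace ℝ (Fin m))
    (S T : Finset (EuclideanSpace ℝ (Fin m)))
    (hSne : S.Nonempty) (hSunit : ∀ v ∈ S, ‖v‖ = 1)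
    (hST : fMat A T ≤ fMat A S) :
    ∃ v ∈ S, sigmaMin S * (fMat A S - fMat A T) ^ 2 / (4 * S.card * fMat A S) ≤
      fMat A (insert v T) - fMat A T := by
  set r := fun j =>
    A j - (Submodule.span ℝ (T : Set (EuclideanSpace ℝ (Fin m)))).starProjection (A j)
  have hgain : ∀ v ∈ S, ∑ j, ⟪r j, v⟫ ^ 2 ≤ fMat A (insert v T) - fMat A T :=
    fun v hv => sum_sq_inner_le_fMat_insert_sub A T (hSunit v hv).le
  have hfS : 0 ≤ 4 * fMat A S := by unfold fMat fVec; positivity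
  have htotal : sigmaMin S * (fMat A S - fMat A T) ^ 2 ≤
      4 * fMat A S * ∑ v ∈ S, (fMat A (insert v T) - fMat A T) :=
    calc sigmaMin S * (fMat A S - fMat A T) ^ 2
        ≤ 4 * fMat A S * ∑ j, sigmaMin S *
            ‖(Submodule.span ℝ (S : Set (EuclideanSpace ℝ (Fin m)))).starProjection (r j)‖ ^ 2 := by
          rw [← Finset.mul_sum, mul_left_comm]
          exact mul_le_mul_of_nonneg_left (sq_fMat_sub_le A S T hST) (sigmaMin_nonneg S)
      _ ≤ 4 * fMat A S * ∑ j, ∑ v ∈ S, ⟪r j, v⟫ ^ 2 := by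
          gcongr with j; exact sigmaMin_mul_norm_sq_starProjection_le S (r j)
      _ ≤ 4 * fMat A S * ∑ v ∈ S, (fMat A (insert v T) - fMat A T) := by
          rw [Finset.sum_comm]; gcongr with v hv; exact hgain v hv
  rw [show (4 : ℝ) * S.card * fMat A S = 4 * fMat A S * S.card by ring]
  exact Finset.exists_div_mul_card_le hSne
    (fun v hv => (Finset.sum_nonneg fun j _ => sq_nonneg _).trans (hgain v hv)) hfS htotal

/-- Key lemma: some element of S gives large marginal gain (matrix version). -/
theorem exists_large_marginal_gain {m n : ℕ}
    (A : Fin n → EuclideanSpace ℝ (Fin m))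
    (S T : Finset (EuclideanSpace ℝ (Fin m)))
    (hSne : S.Nonempty) (hSunit : ∀ v ∈ S, ‖v‖ = 1)
    (hST : fMat A T ≤ fMat A S) (hS0 : 0 < fMat A S) :
    ∃ v ∈ S, sigmaMin S * (fMat A S - fMat A T) ^ 2 / (4 * S.card * fMat A S) ≤
      fMat A (insert v T) - fMat A T :=
  exists_large_marginal_gain_general A S T hSne hSunit hST
end

section
/- Let A ∈ ℝ^{m×n_A} and let B ∈ ℝ^{m×n_B} have unit-norm columns. Let S be a set of columns of B with |S| ≤ k, σ_min(S) > 0, and let T be a set of columns of B with f_A(S) ≥ f_A(T) and f_A(S) > 0. Let 0 < δ < 1 and let s be a natural number with n_B·log(1/δ)/k ≤ s ≤ n_B − |T|. If R is a subset of (columns of B) \ T of size s chosen uniformly at random, then E[ max_{v∈R} ( f_A(T ∪ {v}) − f_A(T) ) ] ≥ (1 − δ)·σ_min(S)·(f_A(S) − f_A(T))² / (4·k·f_A(S)). -/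
/-!
Write `D = f_A(S) - f_A(T)` and `r_j = A_j - Π_T A_j`. Adding a unit vector `v` to `T` gains at
least `∑ j, ⟪r_j, v⟫²`; summing over `v ∈ S` and using `σ_min(S)` bounds this below by
`σ_min(S) ∑ j, ‖Π_S r_j‖²`, and Cauchy–Schwarz gives `D² ≤ 4 f_A(S) ∑ j, ‖Π_S r_j‖²`. Hence the
gains of the columns of `S \ T` add up to at least `σ_min(S) D² / (4 f_A(S))`.

For the random set `R`, bound the best gain in `R` below by the average gain over `R ∩ (S \ T)`.
Summed over all `R`, every column of `S \ T` gets the same total weight by symmetry, and these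
weights add up to the number of sets `R` meeting `S \ T`, a fraction at least `1 - (1 - s/n)^d`
of all of them, where `n = n_B - |T|` and `d = |S \ T|`. Finally
`(1 - (1 - s/n)^d) / d ≥ (1 - (1 - s/n)^k) / k ≥ (1 - δ) / k` by the choice of `s`.
-/

open scoped RealInnerProductSpace

attribute [local instance] Classical.decEq

section Projection

variable {F : Type*} [NormedAddCommGroup F] [InnerProductSpace ℝ F]

lemma Submodule.norm_sq_starProjection_sub_norm_sq_starProjection_of_le {K K' : Submodule ℝ F}
    [K.HasOrthogonalProjection] [K'.HasOrthogonalProjection] (h : K ≤ K') (u : F) :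
    ‖K'.starProjection u‖ ^ 2 - ‖K.starProjection u‖ ^ 2 =
      ‖K'.starProjection u - K.starProjection u‖ ^ 2 := by
  have hK : K.starProjection (K'.starProjection u) = K.starProjection u :=
    DFunLike.congr_fun (Submodule.starProjection_comp_starProjection_of_le h) u
  rw [Submodule.norm_sq_eq_add_norm_sq_starProjection (K'.starProjection u) K,
    Submodule.starProjection_orthogonal_val, hK]
  ring

lemma Submodule.inner_sub_starProjection_sq_le {K K' : Submodule ℝ F}
    [K.HasOrthogonalProjection] [K'.HasOrthogonalProjection] (h : K ≤ K') {w : F} (hw : w ∈ K')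
    (hw1 : ‖w‖ ≤ 1) (u : F) :
    ⟪u - K.starProjection u, w⟫ ^ 2 ≤ ‖K'.starProjection u‖ ^ 2 - ‖K.starProjection u‖ ^ 2 := by
  have hproj : K'.starProjection (u - K.starProjection u) =
      K'.starProjection u - K.starProjection u := by
    rw [map_sub, K'.starProjection_eq_self_iff.2 (h (K.starProjection_apply_mem u))]
  have hinner : ⟪u - K.starProjection u, w⟫ = ⟪K'.starProjection u - K.starProjection u, w⟫ := by
    rw [← hproj, K'.inner_starProjection_left_eq_right, K'.starProjection_eq_self_iff.2 hw]
  rw [K.norm_sq_starProjection_sub_norm_sq_starProjection_of_le h, hinner]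
  calc ⟪K'.starProjection u - K.starProjection u, w⟫ ^ 2
      ≤ (‖K'.starProjection u - K.starProjection u‖ * ‖w‖) ^ 2 :=
        sq_le_sq' (neg_le_of_abs_le (abs_real_inner_le_norm _ _)) (real_inner_le_norm _ _)
    _ ≤ ‖K'.starProjection u - K.starProjection u‖ ^ 2 := by
        gcongr; exact mul_le_of_le_one_right (norm_nonneg _) hw1

lemma Submodule.norm_starProjection_sub_norm_starProjection_le (K K' : Submodule ℝ F)
    [K.HasOrthogonalProjection] [K'.HasOrthogonalProjection] (u : F) :
    ‖K'.starProjection u‖ - ‖K.starProjection u‖ ≤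
      ‖K'.starProjection (u - K.starProjection u)‖ := by
  have := norm_add_le (K'.starProjection (u - K.starProjection u))
    (K'.starProjection (K.starProjection u))
  rw [← map_add, sub_add_cancel] at this
  linarith [K'.norm_starProjection_apply_le (K.starProjection u)]

end Projection

section Euclidean

variable {m : ℕ}

local notation "E" => EuclideanSpace ℝ (Fin m)

local notation "proj[" V "]" =>
  Submodule.starProjection (Submodule.span ℝ ((V : Finset E) : Set E))

lemma fVec_eq_norm_sq_starProjection (u : E) (V : Finset E) : fVec u V = ‖proj[V] u‖ ^ 2 :=
  rfl

lemma fVec_le_fVec_insert (u w : E) (V : Finset E) : fVec u V ≤ fVec u (insert w V) := by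
  rw [fVec_eq_norm_sq_starProjection, fVec_eq_norm_sq_starProjection, ← sub_nonneg,
    Submodule.norm_sq_starProjection_sub_norm_sq_starProjection_of_le
      (Submodule.span_mono (by simp)) u]
  positivity

noncomputable def marginalGain {n : ℕ} (A : Fin n → E) (W : Finset E) (w : E) : ℝ :=
  fMat A (insert w W) - fMat A W

lemma marginalGain_eq_sum {n : ℕ} (A : Fin n → E) (W : Finset E) (w : E) :
    marginalGain A W w = ∑ j, (fVec (A j) (insert w W) - fVec (A j) W) :=
  (Finset.sum_sub_distrib _ _).symm

lemma marginalGain_nonneg {n : ℕ} (A : Fin n → E) (W : Finset E) (w : E) :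
    0 ≤ marginalGain A W w := by
  rw [marginalGain_eq_sum]
  exact Finset.sum_nonneg fun j _ => sub_nonneg.2 (fVec_le_fVec_insert _ _ _)

lemma sum_inner_sub_starProjection_sq_le_marginalGain {n : ℕ} (A : Fin n → E) (W : Finset E)
    {w : E} (hw : ‖w‖ ≤ 1) : ∑ j, ⟪A j - proj[W] (A j), w⟫ ^ 2 ≤ marginalGain A W w := by
  rw [marginalGain_eq_sum]
  gcongr with j
  exact (Submodule.span ℝ (W : Set E)).inner_sub_starProjection_sq_le
    (Submodule.span_mono (by simp)) (Submodule.subset_span (by simp)) hw (A j)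

lemma sigmaMin_nonneg_s11 (V : Finset E) : 0 ≤ sigmaMin V :=
  Real.sInf_nonneg fun _ ⟨_, _, hr⟩ => hr ▸ sq_nonneg _

lemma sigmaMin_mul_sum_sq_le_s11 (V : Finset E) (α : V → ℝ) :
    sigmaMin V * ∑ v, α v ^ 2 ≤ ‖∑ v, α v • (v : E)‖ ^ 2 := by
  obtain hc | hc := (Finset.sum_nonneg fun v _ => sq_nonneg (α v) :
    (0 : ℝ) ≤ ∑ v, α v ^ 2).eq_or_lt
  · rw [← hc, mul_zero]
    positivity
  set c := ∑ v, α v ^ 2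
  have hnormalized : ∑ v, (α v / √c) ^ 2 = 1 := by
    simp_rw [div_pow, Real.sq_sqrt hc.le]
    rw [← Finset.sum_div]
    exact div_self hc.ne'
  have hσ : sigmaMin V ≤ ‖∑ v, (α v / √c) • (v : E)‖ ^ 2 :=
    csInf_le ⟨0, fun _ ⟨_, _, hr⟩ => hr ▸ sq_nonneg _⟩ ⟨_, hnormalized, rfl⟩
  have hscale : ‖∑ v, (α v / √c) • (v : E)‖ ^ 2 = ‖∑ v, α v • (v : E)‖ ^ 2 / c := by
    simp_rw [div_eq_inv_mul (α _), ← smul_smul, ← Finset.smul_sum, norm_smul, mul_pow,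
      norm_inv, Real.norm_eq_abs, abs_of_pos (Real.sqrt_pos.2 hc), inv_pow,
      Real.sq_sqrt hc.le, inv_mul_eq_div]
  rwa [hscale, le_div_iff₀ hc] at hσ

lemma sigmaMin_mul_norm_sq_starProjection_le_s11 (V : Finset E) (u : E) :
    sigmaMin V * ‖proj[V] u‖ ^ 2 ≤ ∑ w ∈ V, ⟪u, w⟫ ^ 2 := by
  set K := Submodule.span ℝ (V : Set E)
  have hp : ‖K.starProjection u‖ ^ 2 = ⟪u, K.starProjection u⟫ := by
    rw [← real_inner_self_eq_norm_sq, K.inner_starProjection_left_eq_right,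
      K.starProjection_eq_self_iff.2 (K.starProjection_apply_mem u)]
  obtain ⟨α, hα⟩ := Submodule.mem_span_finset'.1 (K.starProjection_apply_mem u)
  rw [← hα, inner_sum] at hp
  simp_rw [real_inner_smul_right] at hp
  rw [← hα]
  set P := ‖∑ v, α v • (v : E)‖ ^ 2
  have hCS : P ^ 2 ≤ (∑ v, α v ^ 2) * ∑ w ∈ V, ⟪u, w⟫ ^ 2 := by
    rw [hp, ← Finset.sum_coe_sort V]
    exact Finset.sum_mul_sq_le_sq_mul_sq _ _ _
  have hσ : sigmaMin V * ∑ v, α v ^ 2 ≤ P := sigmaMin_mul_sum_sq_le_s11 V α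
  have hσ0 := sigmaMin_nonneg_s11 V
  have hP0 : 0 ≤ P := sq_nonneg _
  obtain hP | hP := hP0.eq_or_lt
  · rw [← hP, mul_zero]
    exact Finset.sum_nonneg fun _ _ => sq_nonneg _
  refine le_of_mul_le_mul_left ?_ hP
  calc P * (sigmaMin V * P) = sigmaMin V * P ^ 2 := by ring
    _ ≤ sigmaMin V * ((∑ v, α v ^ 2) * ∑ w ∈ V, ⟪u, w⟫ ^ 2) := by gcongr
    _ ≤ P * ∑ w ∈ V, ⟪u, w⟫ ^ 2 := by rw [← mul_assoc]; gcongr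

lemma fMat_nonneg {n : ℕ} (A : Fin n → E) (V : Finset E) : 0 ≤ fMat A V :=
  Finset.sum_nonneg fun _ _ => sq_nonneg _

lemma sq_fMat_sub_fMat_le {n : ℕ} (A : Fin n → E) {V W : Finset E}
    (hWV : fMat A W ≤ fMat A V) :
    (fMat A V - fMat A W) ^ 2 ≤ 4 * fMat A V * ∑ j, ‖proj[V] (A j - proj[W] (A j))‖ ^ 2 := by
  set a : Fin n → ℝ := fun j => ‖proj[V] (A j)‖
  set b : Fin n → ℝ := fun j => ‖proj[W] (A j)‖
  set x : Fin n → ℝ := fun j => ‖proj[V] (A j - proj[W] (A j))‖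
  have hgap : fMat A V - fMat A W ≤ ∑ j, x j * (a j + b j) := by
    rw [fMat, fMat, ← Finset.sum_sub_distrib]
    gcongr with j
    have hx : a j - b j ≤ x j :=
      Submodule.norm_starProjection_sub_norm_starProjection_le _ _ (A j)
    rw [fVec_eq_norm_sq_starProjection, fVec_eq_norm_sq_starProjection, sq_sub_sq, mul_comm]
    exact mul_le_mul_of_nonneg_right hx (add_nonneg (norm_nonneg _) (norm_nonneg _))
  have hab : ∑ j, (a j + b j) ^ 2 ≤ 4 * fMat A V := by
    calc ∑ j, (a j + b j) ^ 2 ≤ ∑ j, (2 * a j ^ 2 + 2 * b j ^ 2) := by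
          gcongr with j; nlinarith [sq_nonneg (a j - b j)]
      _ = 2 * fMat A V + 2 * fMat A W := by
          rw [Finset.sum_add_distrib, ← Finset.mul_sum, ← Finset.mul_sum]; rfl
      _ ≤ 4 * fMat A V := by linarith
  calc (fMat A V - fMat A W) ^ 2 ≤ (∑ j, x j * (a j + b j)) ^ 2 :=
        pow_le_pow_left₀ (sub_nonneg.2 hWV) hgap 2
    _ ≤ (∑ j, x j ^ 2) * ∑ j, (a j + b j) ^ 2 := Finset.sum_mul_sq_le_sq_mul_sq _ _ _
    _ ≤ 4 * fMat A V * ∑ j, x j ^ 2 := by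
        rw [mul_comm]; gcongr

lemma sigmaMin_mul_sum_norm_sq_starProjection_le_sum_marginalGain {n : ℕ} (A : Fin n → E)
    (V W : Finset E) (hV : ∀ w ∈ V, ‖w‖ ≤ 1) :
    sigmaMin V * ∑ j, ‖proj[V] (A j - proj[W] (A j))‖ ^ 2 ≤ ∑ w ∈ V, marginalGain A W w :=
  calc sigmaMin V * ∑ j, ‖proj[V] (A j - proj[W] (A j))‖ ^ 2
      ≤ ∑ j, ∑ w ∈ V, ⟪A j - proj[W] (A j), w⟫ ^ 2 := by
        rw [Finset.mul_sum]
        gcongr with j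
        exact sigmaMin_mul_norm_sq_starProjection_le_s11 V _
    _ = ∑ w ∈ V, ∑ j, ⟪A j - proj[W] (A j), w⟫ ^ 2 := Finset.sum_comm
    _ ≤ ∑ w ∈ V, marginalGain A W w := by
        gcongr with w hw
        exact sum_inner_sub_starProjection_sq_le_marginalGain A W (hV w hw)

theorem sigmaMin_mul_sq_fMat_sub_le {n : ℕ} (A : Fin n → E) {V W : Finset E}
    (hWV : fMat A W ≤ fMat A V) (hV : ∀ w ∈ V, ‖w‖ ≤ 1) :
    sigmaMin V * (fMat A V - fMat A W) ^ 2 ≤ 4 * fMat A V * ∑ w ∈ V, marginalGain A W w :=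
  calc sigmaMin V * (fMat A V - fMat A W) ^ 2
      ≤ sigmaMin V * (4 * fMat A V * ∑ j, ‖proj[V] (A j - proj[W] (A j))‖ ^ 2) :=
        mul_le_mul_of_nonneg_left (sq_fMat_sub_fMat_le A hWV) (sigmaMin_nonneg_s11 V)
    _ = 4 * fMat A V * (sigmaMin V * ∑ j, ‖proj[V] (A j - proj[W] (A j))‖ ^ 2) := by ring
    _ ≤ 4 * fMat A V * ∑ w ∈ V, marginalGain A W w := by
        gcongr
        · linarith [fMat_nonneg A V]
        · exact sigmaMin_mul_sum_norm_sq_starProjection_le_sum_marginalGain A V W hV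

lemma sigmaMin_mul_sq_div_le_sum_sdiff_marginalGain {ι : Type*} [DecidableEq ι] {n : ℕ}
    (A : Fin n → E) (B : ι → E) {S T : Finset ι} (hB : ∀ j ∈ S, ‖B j‖ ≤ 1)
    (hST : fMat A (T.image B) ≤ fMat A (S.image B)) :
    sigmaMin (S.image B) * (fMat A (S.image B) - fMat A (T.image B)) ^ 2 /
        (4 * fMat A (S.image B)) ≤ ∑ v ∈ S \ T, marginalGain A (T.image B) (B v) := by
  have hf : 0 ≤ 4 * fMat A (S.image B) := by linarith [fMat_nonneg A (S.image B)]
  refine div_le_of_le_mul₀ hf (Finset.sum_nonneg fun v _ => marginalGain_nonneg A _ _) ?_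
  refine (sigmaMin_mul_sq_fMat_sub_le A hST (by simpa using hB)).trans ?_
  rw [mul_comm]
  gcongr
  calc ∑ w ∈ S.image B, marginalGain A (T.image B) w
      ≤ ∑ v ∈ S, marginalGain A (T.image B) (B v) :=
        Finset.sum_image_le_of_nonneg fun w _ => marginalGain_nonneg A _ w
    _ = ∑ v ∈ S \ T, marginalGain A (T.image B) (B v) := by
        refine (Finset.sum_subset Finset.sdiff_subset fun v hvS hv => ?_).symm
        have hvT : B v ∈ T.image B := Finset.mem_image_of_mem B (by simpa [hvS] using hv)
        simp [marginalGain, hvT]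

end Euclidean

lemma Nat.choose_le_one_sub_div_mul_choose_succ {N n : ℕ} (s : ℕ) (hN : N + 1 ≤ n) :
    (N.choose s : ℝ) ≤ (1 - (s : ℝ) / n) * ((N + 1).choose s : ℝ) := by
  rcases le_or_gt s (N + 1) with hs | hs
  · have hrec : (N.choose s : ℝ) * (N + 1) = (N + 1).choose s * ((N + 1 : ℝ) - s) := by
      have := congrArg (Nat.cast : ℕ → ℝ) (Nat.choose_mul_succ_eq N s)
      push_cast [Nat.cast_sub hs] at this
      exact this
    have hn : (N + 1 : ℝ) ≤ n := by exact_mod_cast hN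
    have hN0 : (0 : ℝ) < N + 1 := by positivity
    refine le_of_mul_le_mul_right ?_ hN0
    rw [hrec, mul_comm (1 - (s : ℝ) / n), mul_assoc]
    gcongr
    rw [sub_mul, div_mul_eq_mul_div, one_mul]
    gcongr
    rw [div_le_iff₀ (hN0.trans_le hn)]
    gcongr
  · rw [Nat.choose_eq_zero_of_lt (by omega), Nat.choose_eq_zero_of_lt hs]
    simp

lemma Nat.choose_sub_le_pow_mul_choose {n s d : ℕ} (hs : s ≤ n) (hd : d ≤ n) :
    ((n - d).choose s : ℝ) ≤ (1 - (s : ℝ) / n) ^ d * (n.choose s : ℝ) := by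
  have hq : (0 : ℝ) ≤ 1 - s / n :=
    sub_nonneg.2 (div_le_one_of_le₀ (by exact_mod_cast hs) (by positivity))
  induction d with
  | zero => simp
  | succ d ih =>
    calc ((n - (d + 1)).choose s : ℝ) ≤ (1 - s / n) * (n - (d + 1) + 1).choose s :=
          Nat.choose_le_one_sub_div_mul_choose_succ s (by omega)
      _ = (1 - s / n) * (n - d).choose s := by rw [show n - (d + 1) + 1 = n - d by omega]
      _ ≤ (1 - s / n) * ((1 - s / n) ^ d * n.choose s) := by gcongr; exact ih (by omega)
      _ = (1 - s / n) ^ (d + 1) * n.choose s := by ring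

lemma one_sub_pow_div_le_one_sub_pow_div {q : ℝ} (hq0 : 0 ≤ q) (hq1 : q ≤ 1) {d k : ℕ}
    (hd : 0 < d) (hdk : d ≤ k) : (1 - q ^ k) / k ≤ (1 - q ^ d) / d := by
  have hanti : ∀ i j : ℕ, i ≤ j → q ^ j ≤ q ^ i := fun i j h => pow_le_pow_of_le_one hq0 hq1 h
  have htail : ∑ i ∈ Finset.Ico d k, q ^ i ≤ (k - d : ℕ) * q ^ d := by
    rw [← Nat.card_Ico, ← nsmul_eq_mul]
    exact Finset.sum_le_card_nsmul _ _ _ fun i hi => hanti d i (Finset.mem_Ico.1 hi).1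
  have hhead : (d : ℝ) * q ^ d ≤ ∑ i ∈ Finset.range d, q ^ i := by
    simpa using Finset.card_nsmul_le_sum (Finset.range d) (q ^ ·) (q ^ d)
      fun i hi => hanti i d (Finset.mem_range.1 hi).le
  have hsums : (d : ℝ) * ∑ i ∈ Finset.range k, q ^ i ≤ k * ∑ i ∈ Finset.range d, q ^ i := by
    rw [← Finset.sum_range_add_sum_Ico _ hdk]
    push_cast [hdk] at htail
    have hkd : (0 : ℝ) ≤ k - d := by rw [sub_nonneg]; exact_mod_cast hdk
    nlinarith
  rw [div_le_div_iff₀ (by exact_mod_cast hd.trans_le hdk) (by exact_mod_cast hd),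
    ← geom_sum_mul_neg, ← geom_sum_mul_neg]
  nlinarith [mul_le_mul_of_nonneg_right hsums (sub_nonneg.2 hq1)]

lemma one_sub_div_pow_le_of_log_le {n s k : ℕ} {δ : ℝ} (hδ : 0 < δ) (hn : 0 < n) (hs : s ≤ n)
    (h : n * Real.log (1 / δ) ≤ s * k) : (1 - (s : ℝ) / n) ^ k ≤ δ := by
  have hn' : (0 : ℝ) < n := by exact_mod_cast hn
  have hq : 0 ≤ 1 - (s : ℝ) / n :=
    sub_nonneg.2 (div_le_one_of_le₀ (by exact_mod_cast hs) hn'.le)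
  calc (1 - (s : ℝ) / n) ^ k ≤ Real.exp (-(s / n)) ^ k := by
        gcongr; linarith [Real.add_one_le_exp (-((s : ℝ) / n))]
    _ = Real.exp (-(s * k / n)) := by rw [← Real.exp_nat_mul]; ring_nf
    _ ≤ Real.exp (Real.log δ) := by
        gcongr
        rw [one_div, Real.log_inv] at h
        rw [neg_le, le_div_iff₀ hn']
        linarith
    _ = δ := Real.exp_log hδ

section Sampling

variable {ι : Type*}

lemma Finset.sum_powersetCard_map_perm {M : Type*} [AddCommMonoid M] {U : Finset ι}
    {σ : Equiv.Perm ι} (hσ : {a | σ a ≠ a} ⊆ U) (s : ℕ) (F : Finset ι → M) :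
    ∑ R ∈ U.powersetCard s, F (R.map σ.toEmbedding) = ∑ R ∈ U.powersetCard s, F R := by
  conv_rhs => rw [← Finset.map_perm hσ, Finset.powersetCard_map, Finset.sum_map]
  rfl

variable [DecidableEq ι]

/-- The total weight `v` receives when, for each `R ∈ P`, the largest value of a function on `R`
is bounded below by its mean over `R ∩ S`. -/
noncomputable def hitWeight (P : Finset (Finset ι)) (S : Finset ι) (v : ι) : ℝ :=
  ∑ R ∈ P with v ∈ R, ((R ∩ S).card : ℝ)⁻¹

lemma sum_div_card_inter_le_sSup_image {g : ι → ℝ} (hg : ∀ v, 0 ≤ g v) (R S : Finset ι) :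
    (∑ v ∈ R ∩ S, g v) / (R ∩ S).card ≤ sSup (g '' R) := by
  have hsup : ∀ v ∈ R, g v ≤ sSup (g '' R) := fun v hv =>
    le_csSup (R.finite_toSet.image g).bddAbove ⟨v, hv, rfl⟩
  refine div_le_of_le_mul₀ (Nat.cast_nonneg _) (Real.sSup_nonneg ?_) ?_
  · rintro _ ⟨v, -, rfl⟩
    exact hg v
  · rw [mul_comm, ← nsmul_eq_mul]
    exact Finset.sum_le_card_nsmul _ _ _ fun v hv => hsup v (Finset.mem_inter.1 hv).1

lemma sum_mul_hitWeight_le (P : Finset (Finset ι)) (S : Finset ι) {g : ι → ℝ}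
    (hg : ∀ v, 0 ≤ g v) : ∑ v ∈ S, g v * hitWeight P S v ≤ ∑ R ∈ P, sSup (g '' R) :=
  calc ∑ v ∈ S, g v * hitWeight P S v
      = ∑ R ∈ P, ∑ v ∈ S with v ∈ R, g v * ((R ∩ S).card : ℝ)⁻¹ := by
        simp_rw [hitWeight, Finset.mul_sum]
        exact Finset.sum_comm' fun _ _ => by simp only [Finset.mem_filter]; tauto
    _ = ∑ R ∈ P, (∑ v ∈ R ∩ S, g v) / (R ∩ S).card := by
        simp_rw [Finset.filter_mem_eq_inter, Finset.inter_comm S, ← Finset.sum_mul,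
          div_eq_mul_inv]
    _ ≤ ∑ R ∈ P, sSup (g '' R) := by
        gcongr with R
        exact sum_div_card_inter_le_sSup_image hg R S

lemma hitWeight_powersetCard_eq_of_mem {U S : Finset ι} (hSU : S ⊆ U) (s : ℕ) {v w : ι}
    (hv : v ∈ S) (hw : w ∈ S) :
    hitWeight (U.powersetCard s) S v = hitWeight (U.powersetCard s) S w := by
  set σ := Equiv.swap v w
  have hσS : {a | σ a ≠ a} ⊆ S := fun a ha => by
    obtain ⟨-, rfl | rfl⟩ := Equiv.swap_apply_ne_self_iff.1 ha <;> assumption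
  have hσ : σ.symm = σ := Equiv.symm_swap v w
  rw [hitWeight, hitWeight, Finset.sum_filter, Finset.sum_filter,
    ← Finset.sum_powersetCard_map_perm (hσS.trans hSU)]
  refine Finset.sum_congr rfl fun R _ => ?_
  rw [← Finset.map_perm hσS, ← Finset.map_inter, Finset.card_map, Finset.map_perm hσS]
  simp only [Finset.mem_map_equiv, hσ, σ, Equiv.swap_apply_left]

lemma card_mul_hitWeight_powersetCard {U S : Finset ι} (hSU : S ⊆ U) (s : ℕ) {v : ι}
    (hv : v ∈ S) :
    S.card * hitWeight (U.powersetCard s) S v =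
      ((U.powersetCard s).filter (fun R => ¬Disjoint R S)).card := by
  set P := U.powersetCard s
  calc S.card * hitWeight P S v = ∑ w ∈ S, hitWeight P S w := by
        rw [Finset.sum_congr rfl fun w hw => hitWeight_powersetCard_eq_of_mem hSU s hw hv,
          Finset.sum_const, nsmul_eq_mul]
    _ = ∑ R ∈ P, ∑ w ∈ S with w ∈ R, ((R ∩ S).card : ℝ)⁻¹ := by
        simp_rw [hitWeight]
        exact Finset.sum_comm' fun _ _ => by simp only [Finset.mem_filter]; tauto
    _ = ∑ R ∈ P, if Disjoint R S then 0 else 1 := by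
        refine Finset.sum_congr rfl fun R _ => ?_
        rw [Finset.sum_const, Finset.filter_mem_eq_inter, Finset.inter_comm, nsmul_eq_mul]
        split_ifs with h
        · simp [Finset.disjoint_iff_inter_eq_empty.1 h]
        · exact mul_inv_cancel₀ (by simpa [Finset.disjoint_iff_inter_eq_empty] using h)
    _ = _ := by simp [Finset.sum_ite]

lemma Finset.filter_disjoint_powersetCard {U S : Finset ι} (s : ℕ) :
    (U.powersetCard s).filter (Disjoint · S) = (U \ S).powersetCard s := by
  ext R
  simp [Finset.subset_sdiff, and_right_comm]

lemma one_sub_pow_mul_choose_le_card_filter_not_disjoint {U S : Finset ι} (hSU : S ⊆ U) {s : ℕ}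
    (hs : s ≤ U.card) :
    (1 - (1 - (s : ℝ) / U.card) ^ S.card) * U.card.choose s ≤
      ((U.powersetCard s).filter (fun R => ¬Disjoint R S)).card := by
  have hsplit := Finset.card_filter_add_card_filter_not (s := U.powersetCard s) (Disjoint · S)
  rw [Finset.filter_disjoint_powersetCard, Finset.card_powersetCard, Finset.card_powersetCard,
    Finset.card_sdiff_of_subset hSU] at hsplit
  have hC : (U.card.choose s : ℝ) = (U.card - S.card).choose s +
      ((U.powersetCard s).filter (fun R => ¬Disjoint R S)).card := by
    exact_mod_cast hsplit.symm
  have := Nat.choose_sub_le_pow_mul_choose hs (Finset.card_le_card hSU)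
  linarith

theorem one_sub_pow_div_card_mul_sum_le_average_sSup {U S : Finset ι} (hSU : S ⊆ U)
    {g : ι → ℝ} (hg : ∀ v, 0 ≤ g v) {s : ℕ} (hs : s ≤ U.card) :
    (1 - (1 - (s : ℝ) / U.card) ^ S.card) / S.card * ∑ v ∈ S, g v ≤
      (∑ R ∈ U.powersetCard s, sSup (g '' R)) / (U.powersetCard s).card := by
  set P := U.powersetCard s
  have hsup : 0 ≤ ∑ R ∈ P, sSup (g '' R) :=
    Finset.sum_nonneg fun R _ => Real.sSup_nonneg (by rintro _ ⟨v, -, rfl⟩; exact hg v)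
  obtain rfl | ⟨v, hv⟩ := S.eq_empty_or_nonempty
  · simpa using div_nonneg hsup (Nat.cast_nonneg _)
  have hP : (0 : ℝ) < P.card := by
    rw [Finset.card_powersetCard]; exact_mod_cast Nat.choose_pos hs
  have hS : (0 : ℝ) < S.card := by exact_mod_cast Finset.card_pos.2 ⟨v, hv⟩
  have hweight :
      (1 - (1 - (s : ℝ) / U.card) ^ S.card) / S.card ≤ hitWeight P S v / P.card := by
    rw [div_le_div_iff₀ hS hP, mul_comm (hitWeight P S v),
      card_mul_hitWeight_powersetCard hSU s hv, Finset.card_powersetCard]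
    exact one_sub_pow_mul_choose_le_card_filter_not_disjoint hSU hs
  have htotal : hitWeight P S v * ∑ w ∈ S, g w ≤ ∑ R ∈ P, sSup (g '' R) := by
    rw [Finset.mul_sum]
    refine le_of_eq_of_le (Finset.sum_congr rfl fun w hw => ?_) (sum_mul_hitWeight_le P S hg)
    rw [hitWeight_powersetCard_eq_of_mem hSU s hv hw, mul_comm]
  calc (1 - (1 - (s : ℝ) / U.card) ^ S.card) / S.card * ∑ v ∈ S, g v
      ≤ hitWeight P S v / P.card * ∑ w ∈ S, g w :=
        mul_le_mul_of_nonneg_right hweight (Finset.sum_nonneg fun w _ => hg w)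
    _ = hitWeight P S v * (∑ w ∈ S, g w) / P.card := by ring
    _ ≤ (∑ R ∈ P, sSup (g '' R)) / P.card := by gcongr

theorem one_sub_div_mul_sum_le_average_sSup {U S : Finset ι} (hSU : S ⊆ U) {g : ι → ℝ}
    (hg : ∀ v, 0 ≤ g v) {s k : ℕ} (hSk : S.card ≤ k) (hs : s ≤ U.card) {δ : ℝ} (hδ : 0 < δ)
    (hlog : U.card * Real.log (1 / δ) ≤ s * k) :
    (1 - δ) / k * ∑ v ∈ S, g v ≤
      (∑ R ∈ U.powersetCard s, sSup (g '' R)) / (U.powersetCard s).card := by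
  refine le_trans ?_ (one_sub_pow_div_card_mul_sum_le_average_sSup hSU hg hs)
  obtain rfl | hS := S.eq_empty_or_nonempty
  · simp
  have hd : 0 < S.card := Finset.card_pos.2 hS
  have hq0 : 0 ≤ 1 - (s : ℝ) / U.card :=
    sub_nonneg.2 (div_le_one_of_le₀ (by exact_mod_cast hs) (Nat.cast_nonneg _))
  have hq1 : 1 - (s : ℝ) / U.card ≤ 1 := sub_le_self _ (by positivity)
  have hqk := one_sub_div_pow_le_of_log_le hδ (hd.trans_le (Finset.card_le_card hSU)) hs hlog
  refine mul_le_mul_of_nonneg_right ?_ (Finset.sum_nonneg fun v _ => hg v)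
  calc (1 - δ) / k ≤ (1 - (1 - (s : ℝ) / U.card) ^ k) / k := by gcongr
    _ ≤ _ := one_sub_pow_div_le_one_sub_pow_div hq0 hq1 hd hSk

end Sampling

/-- Sets of columns of `B` are given by index sets, and the expectation over `R` is the average
over all size-`s` subsets of the indices outside `T`. -/
theorem lazier_expected_marginal_gain_general {m nA nB : ℕ}
    (A : Fin nA → EuclideanSpace ℝ (Fin m)) (B : Fin nB → EuclideanSpace ℝ (Fin m))
    (hB : ∀ j, ‖B j‖ = 1) (k : ℕ) (hk : 1 ≤ k)
    (S T : Finset (Fin nB)) (hSk : S.card ≤ k)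
    (hST : fMat A (T.image B) ≤ fMat A (S.image B))
    (δ : ℝ) (hδ0 : 0 < δ) (hδ1 : δ < 1)
    (s : ℕ) (hs1 : (nB : ℝ) * Real.log (1 / δ) / k ≤ s) (hs2 : s ≤ nB - T.card) :
    (1 - δ) * sigmaMin (S.image B) *
        (fMat A (S.image B) - fMat A (T.image B)) ^ 2 /
        (4 * k * fMat A (S.image B)) ≤
      (∑ R ∈ (Finset.univ \ T).powersetCard s,
          sSup ((fun v => fMat A (insert (B v) (T.image B)) - fMat A (T.image B)) ''
            (R : Set (Fin nB)))) /
        (((Finset.univ \ T).powersetCard s).card : ℝ) := by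
  have hU : (Finset.univ \ T).card = nB - T.card := by
    rw [Finset.card_sdiff_of_subset T.subset_univ, Finset.card_univ, Fintype.card_fin]
  have hlog : (Finset.univ \ T).card * Real.log (1 / δ) ≤ s * k := by
    rw [div_le_iff₀ (by exact_mod_cast hk)] at hs1
    refine le_trans ?_ hs1
    gcongr
    · exact Real.log_nonneg (by rw [le_div_iff₀ hδ0]; linarith)
    · exact_mod_cast hU ▸ Nat.sub_le nB T.card
  have hgain := sigmaMin_mul_sq_div_le_sum_sdiff_marginalGain A B (fun j _ => (hB j).le) hST
  calc (1 - δ) * sigmaMin (S.image B) * (fMat A (S.image B) - fMat A (T.image B)) ^ 2 /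
        (4 * k * fMat A (S.image B))
      = (1 - δ) / k * (sigmaMin (S.image B) * (fMat A (S.image B) - fMat A (T.image B)) ^ 2 /
        (4 * fMat A (S.image B))) := by ring
    _ ≤ (1 - δ) / k * ∑ v ∈ S \ T, marginalGain A (T.image B) (B v) :=
        mul_le_mul_of_nonneg_left hgain (div_nonneg (by linarith) k.cast_nonneg)
    _ ≤ _ := one_sub_div_mul_sum_le_average_sSup (Finset.sdiff_subset_sdiff S.subset_univ le_rfl)
          (fun v => marginalGain_nonneg A _ _) ((Finset.card_le_card Finset.sdiff_subset).trans hSk)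
          (hU ▸ hs2) hδ0 hlog

/-- Expected marginal gain of the lazier-than-lazy greedy sampling step.
S and T are sets of columns of B given by index sets; R ranges uniformly over
all size-s subsets of the columns outside T, and the expectation is the average
over these subsets of the best marginal gain within R. -/
theorem lazier_expected_marginal_gain {m nA nB : ℕ}
    (A : Fin nA → EuclideanSpace ℝ (Fin m)) (B : Fin nB → EuclideanSpace ℝ (Fin m))
    (hB : ∀ j, ‖B j‖ = 1) (k : ℕ) (hk : 1 ≤ k)
    (S T : Finset (Fin nB)) (hSk : S.card ≤ k)
    (hσ : 0 < sigmaMin (S.image B))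
    (hST : fMat A (T.image B) ≤ fMat A (S.image B))
    (hS0 : 0 < fMat A (S.image B))
    (δ : ℝ) (hδ0 : 0 < δ) (hδ1 : δ < 1)
    (s : ℕ) (hs1 : (nB : ℝ) * Real.log (1 / δ) / k ≤ s) (hs2 : s ≤ nB - T.card) :
    (1 - δ) * sigmaMin (S.image B) *
        (fMat A (S.image B) - fMat A (T.image B)) ^ 2 /
        (4 * k * fMat A (S.image B)) ≤
      (∑ R ∈ (Finset.univ \ T).powersetCard s,
          sSup ((fun v => fMat A (insert (B v) (T.image B)) - fMat A (T.image B)) ''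
            (R : Set (Fin nB)))) /
        (((Finset.univ \ T).powersetCard s).card : ℝ) :=
  lazier_expected_marginal_gain_general A B hB k hk S T hSk hST δ hδ0 hδ1 s hs1 hs2
end
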